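/- arXiv:2302.11869 — 8 statements merged into one kernel-verified Lean document; each statement's English description precedes it below -/
import Mathlib

section
/- Let a, b, n, k, c be natural numbers. If c = 0 then the binomial coefficient C(a·2^(n+k), b·2^n) is congruent to C(a·2^k, b) modulo 2^(k+1); and if 1 ≤ c ≤ 2^n − 1 then C(a·2^(n+k), b·2^n + c) is congruent to 0 modulo 2^(k+1). -/
open Polynomial Finset

lemma key_dvd (A j k : ℕ) (hA : 2 ^ k ∣ A) (hj : 1 ≤ j) :
    2 ^ (k + 1) ∣ 2 ^ j * Nat.choose A j := by
  rcases Nat.eq_zero_or_pos (Nat.choose A j) with h0 | hpos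
  · simp [h0]
  have hjA : j ≤ A := by
    by_contra h
    simp [Nat.choose_eq_zero_of_lt (Nat.lt_of_not_le h)] at hpos
  have hA1 : 1 ≤ A := le_trans hj hjA
  have hid : A * Nat.choose (A - 1) (j - 1) = Nat.choose A j * j := by
    have := Nat.add_one_mul_choose_eq (A - 1) (j - 1)
    rwa [Nat.sub_add_cancel hA1,
      Nat.sub_add_cancel hj] at this
  have hdvd : 2 ^ k ∣ Nat.choose A j * j := hid ▸ (hA.mul_right _)
  have hjne : j ≠ 0 := Nat.one_le_iff_ne_zero.mp hj
  have hcne : Nat.choose A j ≠ 0 := Nat.pos_iff_ne_zero.mp hpos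
  have hprod_ne : Nat.choose A j * j ≠ 0 := mul_ne_zero hcne hjne
  have hp2 : Nat.Prime 2 := Nat.prime_two
  have hk : k ≤ (Nat.choose A j * j).factorization 2 :=
    (Nat.Prime.pow_dvd_iff_le_factorization hp2 hprod_ne).mp hdvd
  rw [Nat.factorization_mul hcne hjne] at hk
  set v := j.factorization 2
  set w := (Nat.choose A j).factorization 2
  have hv : v + 1 ≤ j := by
    have h1 : 2 ^ v ∣ j := Nat.ordProj_dvd j 2
    have h2 : 2 ^ v ≤ j := Nat.le_of_dvd (Nat.lt_of_lt_of_le Nat.one_pos hj) h1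
    have h3 : v < 2 ^ v := Nat.lt_two_pow_self
    omega
  have : k + 1 ≤ j + w := by
    have : k ≤ w + v := by simpa [Finsupp.add_apply] using hk
    omega
  refine (Nat.Prime.pow_dvd_iff_le_factorization hp2 (by positivity)).mpr ?_
  rw [Nat.factorization_mul (by positivity) hcne, Nat.Prime.factorization_pow hp2]
  simpa [Finsupp.add_apply] using this

lemma poly_eq (A k : ℕ) (hA : 2 ^ k ∣ A) :
    ((1 + X : Polynomial (ZMod (2 ^ (k + 1))))) ^ (2 * A) = (1 + X ^ 2) ^ A := by
  rw [pow_mul]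
  have h2 : ((1 + X : Polynomial (ZMod (2 ^ (k + 1))))) ^ 2 = 2 * X + (1 + X ^ 2) := by ring
  rw [h2, add_pow]
  rw [Finset.sum_eq_single 0]
  · simp
  · intro j hj hne
    have hj1 : 1 ≤ j := Nat.one_le_iff_ne_zero.mpr hne
    have hz : ((2 ^ j * Nat.choose A j : ℕ) : ZMod (2 ^ (k + 1))) = 0 :=
      (ZMod.natCast_eq_zero_iff _ _).mpr (key_dvd A j k hA hj1)
    have hz' : ((2 ^ j * Nat.choose A j : ℕ) : Polynomial (ZMod (2 ^ (k + 1)))) = 0 := by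
      rw [← Polynomial.C_eq_natCast, hz, map_zero]
    have heq : ((2 : Polynomial (ZMod (2 ^ (k + 1)))) * X) ^ j * (1 + X ^ 2) ^ (A - j)
          * (A.choose j : Polynomial (ZMod (2 ^ (k + 1))))
        = ((2 ^ j * Nat.choose A j : ℕ) : Polynomial (ZMod (2 ^ (k + 1))))
          * (X ^ j * (1 + X ^ 2) ^ (A - j)) := by
      push_cast
      ring
    rw [heq, hz', zero_mul]
  · intro h
    exact absurd (Finset.mem_range.mpr (Nat.succ_pos A)) h

lemma expand_form (A k : ℕ) :
    ((1 + X ^ 2 : Polynomial (ZMod (2 ^ (k + 1))))) ^ A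
      = expand (ZMod (2 ^ (k + 1))) 2 ((1 + X) ^ A) := by
  rw [map_pow, map_add, map_one, expand_X]

lemma Leven (A B k : ℕ) (hA : 2 ^ k ∣ A) :
    Nat.choose (2 * A) (2 * B) ≡ Nat.choose A B [MOD 2 ^ (k + 1)] := by
  rw [← ZMod.natCast_eq_natCast_iff]
  have h := congrArg (fun p => Polynomial.coeff p (2 * B)) (poly_eq A k hA)
  rw [expand_form, coeff_one_add_X_pow, coeff_expand_mul' (by norm_num : (0:ℕ) < 2),
    coeff_one_add_X_pow] at h
  exact h

lemma Lodd (A B k : ℕ) (hA : 2 ^ k ∣ A) :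
    Nat.choose (2 * A) (2 * B + 1) ≡ 0 [MOD 2 ^ (k + 1)] := by
  rw [← ZMod.natCast_eq_natCast_iff]
  have h := congrArg (fun p => Polynomial.coeff p (2 * B + 1)) (poly_eq A k hA)
  have hnd : ¬ (2 ∣ 2 * B + 1) := by omega
  rw [expand_form, coeff_one_add_X_pow, coeff_expand (by norm_num : (0:ℕ) < 2),
    if_neg hnd] at h
  simpa using h

lemma part1 (a b k : ℕ) : ∀ n, Nat.choose (a * 2 ^ (n + k)) (b * 2 ^ n)
    ≡ Nat.choose (a * 2 ^ k) b [MOD 2 ^ (k + 1)]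
  | 0 => by simp [Nat.ModEq.refl]
  | n + 1 => by
    have hA : 2 ^ k ∣ a * 2 ^ (n + k) := ⟨a * 2 ^ n, by ring⟩
    have e1 : a * 2 ^ ((n + 1) + k) = 2 * (a * 2 ^ (n + k)) := by ring
    have e2 : b * 2 ^ (n + 1) = 2 * (b * 2 ^ n) := by ring
    rw [e1, e2]
    exact (Leven _ _ k hA).trans (part1 a b k n)

lemma part2 (a k : ℕ) : ∀ n, ∀ b c, 1 ≤ c → c ≤ 2 ^ n - 1 →
    Nat.choose (a * 2 ^ (n + k)) (b * 2 ^ n + c) ≡ 0 [MOD 2 ^ (k + 1)]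
  | 0 => by intro b c h1 h2; omega
  | n + 1 => by
    intro b c h1 h2
    have hA : 2 ^ k ∣ a * 2 ^ (n + k) := ⟨a * 2 ^ n, by ring⟩
    have e1 : a * 2 ^ ((n + 1) + k) = 2 * (a * 2 ^ (n + k)) := by ring
    rcases Nat.even_or_odd c with ⟨c', hc⟩ | ⟨c', hc⟩
    · have hc1 : 1 ≤ c' := by omega
      have hpow : 2 ^ (n + 1) = 2 * 2 ^ n := by ring
      have hc2 : c' ≤ 2 ^ n - 1 := by
        have h2n : 1 ≤ 2 ^ n := Nat.one_le_two_pow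
        rw [hpow] at h2; omega
      have hcc : c = 2 * c' := by omega
      have e2 : b * 2 ^ (n + 1) + c = 2 * (b * 2 ^ n + c') := by rw [hcc]; ring
      rw [e1, e2]
      exact (Leven _ _ k hA).trans (part2 a k n b c' hc1 hc2)
    · have e2 : b * 2 ^ (n + 1) + c = 2 * (b * 2 ^ n + c') + 1 := by rw [hc]; ring
      rw [e1, e2]
      exact Lodd _ _ k hA

/-- Congruences for binomial coefficients: for natural numbers
`a b n k c`, if `c = 0` then `C(a·2^(n+k), b·2^n) ≡ C(a·2^k, b) [MOD 2^(k+1)]`,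
and if `1 ≤ c ≤ 2^n - 1` then `C(a·2^(n+k), b·2^n + c) ≡ 0 [MOD 2^(k+1)]`. -/
theorem binomial_two_power_congruence (a b n k c : ℕ) :
    (c = 0 →
      Nat.choose (a * 2 ^ (n + k)) (b * 2 ^ n) ≡ Nat.choose (a * 2 ^ k) b [MOD 2 ^ (k + 1)]) ∧
    (1 ≤ c → c ≤ 2 ^ n - 1 →
      Nat.choose (a * 2 ^ (n + k)) (b * 2 ^ n + c) ≡ 0 [MOD 2 ^ (k + 1)]) := by
  exact ⟨fun _ => part1 a b k n, fun h1 h2 => part2 a k n b c h1 h2⟩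
end

section
/- For every natural number n ≥ 0, in the polynomial ring ℤ[x, y] one has the congruence (x+y)^(2^(n+3)) − x^(2^(n+3)) − y^(2^(n+3)) ≡ 8·x^(2^n)·y^(7·2^n) + 12·x^(2·2^n)·y^(6·2^n) + 8·x^(3·2^n)·y^(5·2^n) + 6·x^(4·2^n)·y^(4·2^n) + 8·x^(5·2^n)·y^(3·2^n) + 12·x^(6·2^n)·y^(2·2^n) + 8·x^(7·2^n)·y^(2^n) modulo 16. -/
/-!
Modulo `2` the Frobenius gives `(x + y)^(2^n) ≡ x^(2^n) + y^(2^n)`, and a congruence modulo `2`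
becomes a congruence modulo `2^4` after raising both sides to the power `2^3`. Hence
`(x + y)^(2^(n+3)) ≡ (a + b)^8` modulo `16`, where `a = x^(2^n)` and `b = y^(2^n)`, and the claimed
right-hand side is the binomial expansion of `(a + b)^8 - a^8 - b^8` reduced modulo `16`.
-/

open MvPolynomial

section

variable {R : Type*} [CommRing R]

theorem prime_dvd_add_pow_prime_pow_sub {p : ℕ} (hp : p.Prime) (x y : R) (n : ℕ) :
    (p : R) ∣ (x + y) ^ p ^ n - (x ^ p ^ n + y ^ p ^ n) := by
  rw [add_pow_prime_pow_eq' hp x y n, add_sub_cancel_left]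
  exact dvd_mul_right _ _

theorem pow_succ_dvd_add_pow_prime_pow_sub {p : ℕ} (hp : p.Prime) (x y : R) (n k : ℕ) :
    (p ^ (k + 1) : R) ∣ (x + y) ^ p ^ (n + k) - (x ^ p ^ n + y ^ p ^ n) ^ p ^ k := by
  rw [pow_add p, pow_mul]
  exact dvd_sub_pow_of_dvd_sub (prime_dvd_add_pow_prime_pow_sub hp x y n) k

theorem sixteen_dvd_add_pow_eight_sub (a b : R) :
    (16 : R) ∣ (a + b) ^ 8 - a ^ 8 - b ^ 8
      - (8 * a * b ^ 7 + 12 * a ^ 2 * b ^ 6 + 8 * a ^ 3 * b ^ 5 + 6 * a ^ 4 * b ^ 4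
        + 8 * a ^ 5 * b ^ 3 + 12 * a ^ 6 * b ^ 2 + 8 * a ^ 7 * b) :=
  Dvd.intro (a ^ 2 * b ^ 6 + 3 * a ^ 3 * b ^ 5 + 4 * a ^ 4 * b ^ 4 + 3 * a ^ 5 * b ^ 3
    + a ^ 6 * b ^ 2) (by ring)

end

/-- For every `n : ℕ`, in `ℤ[x, y]` one has
`(x+y)^(2^(n+3)) − x^(2^(n+3)) − y^(2^(n+3)) ≡
  8·x^(2^n)·y^(7·2^n) + 12·x^(2·2^n)·y^(6·2^n) + 8·x^(3·2^n)·y^(5·2^n)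
  + 6·x^(4·2^n)·y^(4·2^n) + 8·x^(5·2^n)·y^(3·2^n) + 12·x^(6·2^n)·y^(2·2^n)
  + 8·x^(7·2^n)·y^(2^n)` modulo `16`
(i.e. every coefficient of the difference is divisible by 16).
Here `x = X 0`, `y = X 1`. -/
theorem pow_two_pow_add_three_congruence (n : ℕ) :
    ∀ m : Fin 2 →₀ ℕ, (16 : ℤ) ∣ MvPolynomial.coeff m
      (((X 0 + X 1 : MvPolynomial (Fin 2) ℤ) ^ (2 ^ (n + 3))
          - (X 0) ^ (2 ^ (n + 3)) - (X 1) ^ (2 ^ (n + 3)))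
        - (8 * (X 0) ^ (2 ^ n) * (X 1) ^ (7 * 2 ^ n)
          + 12 * (X 0) ^ (2 * 2 ^ n) * (X 1) ^ (6 * 2 ^ n)
          + 8 * (X 0) ^ (3 * 2 ^ n) * (X 1) ^ (5 * 2 ^ n)
          + 6 * (X 0) ^ (4 * 2 ^ n) * (X 1) ^ (4 * 2 ^ n)
          + 8 * (X 0) ^ (5 * 2 ^ n) * (X 1) ^ (3 * 2 ^ n)
          + 12 * (X 0) ^ (6 * 2 ^ n) * (X 1) ^ (2 * 2 ^ n)
          + 8 * (X 0) ^ (7 * 2 ^ n) * (X 1) ^ (2 ^ n))) := by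
  rw [← C_dvd_iff_dvd_coeff, map_ofNat]
  have hfrob := pow_succ_dvd_add_pow_prime_pow_sub Nat.prime_two
    (X 0 : MvPolynomial (Fin 2) ℤ) (X 1) n 3
  have hbinom := sixteen_dvd_add_pow_eight_sub
    ((X 0 : MvPolynomial (Fin 2) ℤ) ^ 2 ^ n) ((X 1) ^ 2 ^ n)
  norm_num only at hfrob
  convert dvd_add hfrob hbinom using 1
  ring
end

section
/- For every natural number n ≥ 0, in the polynomial ring ℤ[x, y] one has the congruence (x+y)^(3·2^(n+2)) − x^(3·2^(n+2)) − y^(3·2^(n+2)) ≡ 4·x^(2^n)·y^(11·2^n) + 2·x^(2·2^n)·y^(10·2^n) + 4·x^(3·2^n)·y^(9·2^n) + 7·x^(4·2^n)·y^(8·2^n) + 4·x^(6·2^n)·y^(6·2^n) + 7·x^(8·2^n)·y^(4·2^n) + 4·x^(9·2^n)·y^(3·2^n) + 2·x^(10·2^n)·y^(2·2^n) + 4·x^(11·2^n)·y^(2^n) modulo 8. -/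
/-!
Squaring `x + y` gives `x² + y² + 2xy`, and `(a + 2c)⁴ ≡ a⁴ (mod 8)`; iterating,
`(x + y)^(2^(n+2)) ≡ (x^(2^n) + y^(2^n))⁴ (mod 8)` in any commutative ring. Cubing this reduces
the congruence to the case `n = 0` with `x, y` replaced by `x^(2^n), y^(2^n)`, which is a
polynomial identity of degree 12.
-/

open MvPolynomial

section CommRing

variable {R : Type*} [CommRing R]

lemma eight_dvd_add_two_mul_pow_four_mul_sub (a c : R) (t : ℕ) :
    (8 : R) ∣ (a + 2 * c) ^ (4 * t) - a ^ (4 * t) := by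
  have hfour : (8 : R) ∣ (a + 2 * c) ^ 4 - a ^ 4 :=
    ⟨a ^ 3 * c + 3 * a ^ 2 * c ^ 2 + 4 * a * c ^ 3 + 2 * c ^ 4, by ring⟩
  rw [pow_mul, pow_mul]
  exact hfour.trans (sub_dvd_pow_sub_pow _ _ t)

lemma eight_dvd_add_pow_two_pow_sub (n : ℕ) (x y : R) :
    (8 : R) ∣ (x + y) ^ 2 ^ (n + 2) - (x ^ 2 ^ n + y ^ 2 ^ n) ^ 4 := by
  induction n generalizing x y with
  | zero => simp
  | succ n ih =>
    have hsq : (8 : R) ∣ (x + y) ^ 2 ^ (n + 3) - (x ^ 2 + y ^ 2) ^ 2 ^ (n + 2) := by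
      have h := eight_dvd_add_two_mul_pow_four_mul_sub (x ^ 2 + y ^ 2) (x * y) (2 ^ n)
      rwa [show x ^ 2 + y ^ 2 + 2 * (x * y) = (x + y) ^ 2 by ring, ← pow_mul,
        show 4 * 2 ^ n = 2 ^ (n + 2) by ring, show 2 * 2 ^ (n + 2) = 2 ^ (n + 3) by ring] at h
    have h := ih (x ^ 2) (y ^ 2)
    rw [← pow_mul, ← pow_mul, ← pow_succ'] at h
    simpa using dvd_add hsq h

lemma eight_dvd_add_pow_three_mul_two_pow_sub (n : ℕ) (x y : R) :
    (8 : R) ∣ (x + y) ^ (3 * 2 ^ (n + 2)) - (x ^ 2 ^ n + y ^ 2 ^ n) ^ 12 := by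
  rw [mul_comm, pow_mul, show 12 = 4 * 3 by rfl, pow_mul]
  exact (eight_dvd_add_pow_two_pow_sub n x y).trans (sub_dvd_pow_sub_pow _ _ 3)

lemma add_pow_twelve_sub_eq (u v : R) :
    (u + v) ^ 12 - u ^ 12 - v ^ 12
      - (4 * u * v ^ 11 + 2 * u ^ 2 * v ^ 10 + 4 * u ^ 3 * v ^ 9 + 7 * u ^ 4 * v ^ 8
        + 4 * u ^ 6 * v ^ 6 + 7 * u ^ 8 * v ^ 4 + 4 * u ^ 9 * v ^ 3 + 2 * u ^ 10 * v ^ 2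
        + 4 * u ^ 11 * v)
      = 8 * (u ^ 11 * v + 8 * u ^ 10 * v ^ 2 + 27 * u ^ 9 * v ^ 3 + 61 * u ^ 8 * v ^ 4
        + 99 * u ^ 7 * v ^ 5 + 115 * u ^ 6 * v ^ 6 + 99 * u ^ 5 * v ^ 7 + 61 * u ^ 4 * v ^ 8
        + 27 * u ^ 3 * v ^ 9 + 8 * u ^ 2 * v ^ 10 + u * v ^ 11) := by
  ring

end CommRing

/-- For every `n : ℕ`, in `ℤ[x, y]` one has
`(x+y)^(3·2^(n+2)) − x^(3·2^(n+2)) − y^(3·2^(n+2)) ≡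
  4·x^(2^n)·y^(11·2^n) + 2·x^(2·2^n)·y^(10·2^n) + 4·x^(3·2^n)·y^(9·2^n)
  + 7·x^(4·2^n)·y^(8·2^n) + 4·x^(6·2^n)·y^(6·2^n) + 7·x^(8·2^n)·y^(4·2^n)
  + 4·x^(9·2^n)·y^(3·2^n) + 2·x^(10·2^n)·y^(2·2^n) + 4·x^(11·2^n)·y^(2^n)`
modulo `8`. Here `x = X 0`, `y = X 1`. -/
theorem pow_three_two_pow_congruence (n : ℕ) :
    ∀ m : Fin 2 →₀ ℕ, (8 : ℤ) ∣ MvPolynomial.coeff m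
      (((X 0 + X 1 : MvPolynomial (Fin 2) ℤ) ^ (3 * 2 ^ (n + 2))
          - (X 0) ^ (3 * 2 ^ (n + 2)) - (X 1) ^ (3 * 2 ^ (n + 2)))
        - (4 * (X 0) ^ (2 ^ n) * (X 1) ^ (11 * 2 ^ n)
          + 2 * (X 0) ^ (2 * 2 ^ n) * (X 1) ^ (10 * 2 ^ n)
          + 4 * (X 0) ^ (3 * 2 ^ n) * (X 1) ^ (9 * 2 ^ n)
          + 7 * (X 0) ^ (4 * 2 ^ n) * (X 1) ^ (8 * 2 ^ n)
          + 4 * (X 0) ^ (6 * 2 ^ n) * (X 1) ^ (6 * 2 ^ n)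
          + 7 * (X 0) ^ (8 * 2 ^ n) * (X 1) ^ (4 * 2 ^ n)
          + 4 * (X 0) ^ (9 * 2 ^ n) * (X 1) ^ (3 * 2 ^ n)
          + 2 * (X 0) ^ (10 * 2 ^ n) * (X 1) ^ (2 * 2 ^ n)
          + 4 * (X 0) ^ (11 * 2 ^ n) * (X 1) ^ (2 ^ n))) := by
  rw [← C_dvd_iff_dvd_coeff, map_ofNat]
  have hpow (p : MvPolynomial (Fin 2) ℤ) (k : ℕ) : p ^ (k * 2 ^ n) = (p ^ 2 ^ n) ^ k := by
    rw [mul_comm, pow_mul]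
  have hsum := dvd_add
    (eight_dvd_add_pow_three_mul_two_pow_sub n (X 0 : MvPolynomial (Fin 2) ℤ) (X 1))
    (Dvd.intro _ (add_pow_twelve_sub_eq (X 0 ^ 2 ^ n) (X 1 ^ 2 ^ n)).symm)
  convert hsum using 1
  simp only [hpow, show 3 * 2 ^ (n + 2) = 12 * 2 ^ n by ring]
  ring
end

section
/- For every natural number n ≥ 0, in the polynomial ring ℤ[x, y] one has the congruence (x+y)^(5·2^(n+1)) − x^(5·2^(n+1)) − y^(5·2^(n+1)) ≡ 2·x^(2^n)·y^(9·2^n) + x^(2·2^n)·y^(8·2^n) + 2·x^(4·2^n)·y^(6·2^n) + 2·x^(6·2^n)·y^(4·2^n) + x^(8·2^n)·y^(2·2^n) + 2·x^(9·2^n)·y^(2^n) modulo 4. -/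
open MvPolynomial

/- Modulo 2 the map `a ↦ a ^ 2 ^ n` is additive, and squaring lifts a congruence modulo 2 to one
modulo 4; hence `(x + y) ^ (2 ^ (n + 1)) ≡ (u + v) ^ 2 (mod 4)` with `u = x ^ 2 ^ n`, `v = y ^ 2 ^ n`.
The claim is then the binomial expansion of `(u + v) ^ 10` read modulo 4. -/

theorem four_dvd_add_pow_two_pow_succ_sub {R : Type*} [CommRing R] (a b : R) (n : ℕ) :
    (4 : R) ∣ (a + b) ^ 2 ^ (n + 1) - (a ^ 2 ^ n + b ^ 2 ^ n) ^ 2 := by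
  obtain ⟨r, hr⟩ := exists_add_pow_prime_pow_eq Nat.prime_two a b n
  have hfrobenius : ((2 : ℕ) : R) ∣ (a + b) ^ 2 ^ n - (a ^ 2 ^ n + b ^ 2 ^ n) :=
    ⟨a * b * r, by rw [hr]; push_cast; ring⟩
  convert dvd_sub_pow_of_dvd_sub hfrobenius 1 using 1
  · norm_num
  · rw [pow_succ, pow_mul]; norm_num

theorem four_dvd_add_pow_ten_sub {R : Type*} [CommRing R] (u v : R) :
    (4 : R) ∣ (u + v) ^ 10 - u ^ 10 - v ^ 10
      - (2 * u * v ^ 9 + u ^ 2 * v ^ 8 + 2 * u ^ 4 * v ^ 6 + 2 * u ^ 6 * v ^ 4 + u ^ 8 * v ^ 2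
        + 2 * u ^ 9 * v) :=
  ⟨2 * u * v ^ 9 + 11 * u ^ 2 * v ^ 8 + 30 * u ^ 3 * v ^ 7 + 52 * u ^ 4 * v ^ 6
    + 63 * u ^ 5 * v ^ 5 + 52 * u ^ 6 * v ^ 4 + 30 * u ^ 7 * v ^ 3 + 11 * u ^ 8 * v ^ 2
    + 2 * u ^ 9 * v, by ring⟩

theorem four_dvd_add_pow_five_mul_two_pow_succ_sub {R : Type*} [CommRing R] (a b : R) (n : ℕ) :
    (4 : R) ∣ ((a + b) ^ (5 * 2 ^ (n + 1)) - a ^ (5 * 2 ^ (n + 1)) - b ^ (5 * 2 ^ (n + 1)))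
      - (2 * a ^ (2 ^ n) * b ^ (9 * 2 ^ n) + a ^ (2 * 2 ^ n) * b ^ (8 * 2 ^ n)
        + 2 * a ^ (4 * 2 ^ n) * b ^ (6 * 2 ^ n) + 2 * a ^ (6 * 2 ^ n) * b ^ (4 * 2 ^ n)
        + a ^ (8 * 2 ^ n) * b ^ (2 * 2 ^ n) + 2 * a ^ (9 * 2 ^ n) * b ^ (2 ^ n)) := by
  have hsum : (4 : R) ∣ (a + b) ^ (5 * 2 ^ (n + 1)) - ((a ^ 2 ^ n + b ^ 2 ^ n) ^ 2) ^ 5 := by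
    rw [pow_mul']
    exact (four_dvd_add_pow_two_pow_succ_sub a b n).trans (sub_dvd_pow_sub_pow _ _ 5)
  have h10 : 5 * 2 ^ (n + 1) = 10 * 2 ^ n := by ring
  convert dvd_add hsum (four_dvd_add_pow_ten_sub (a ^ 2 ^ n) (b ^ 2 ^ n)) using 1
  simp only [h10, pow_mul']
  ring

/-- For every `n : ℕ`, in `ℤ[x, y]` one has
`(x+y)^(5·2^(n+1)) − x^(5·2^(n+1)) − y^(5·2^(n+1)) ≡
  2·x^(2^n)·y^(9·2^n) + x^(2·2^n)·y^(8·2^n) + 2·x^(4·2^n)·y^(6·2^n)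
  + 2·x^(6·2^n)·y^(4·2^n) + x^(8·2^n)·y^(2·2^n) + 2·x^(9·2^n)·y^(2^n)`
modulo `4`. Here `x = X 0`, `y = X 1`. -/
theorem pow_five_two_pow_congruence (n : ℕ) :
    ∀ m : Fin 2 →₀ ℕ, (4 : ℤ) ∣ MvPolynomial.coeff m
      (((X 0 + X 1 : MvPolynomial (Fin 2) ℤ) ^ (5 * 2 ^ (n + 1))
          - (X 0) ^ (5 * 2 ^ (n + 1)) - (X 1) ^ (5 * 2 ^ (n + 1)))
        - (2 * (X 0) ^ (2 ^ n) * (X 1) ^ (9 * 2 ^ n)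
          + (X 0) ^ (2 * 2 ^ n) * (X 1) ^ (8 * 2 ^ n)
          + 2 * (X 0) ^ (4 * 2 ^ n) * (X 1) ^ (6 * 2 ^ n)
          + 2 * (X 0) ^ (6 * 2 ^ n) * (X 1) ^ (4 * 2 ^ n)
          + (X 0) ^ (8 * 2 ^ n) * (X 1) ^ (2 * 2 ^ n)
          + 2 * (X 0) ^ (9 * 2 ^ n) * (X 1) ^ (2 ^ n))) := by
  refine (C_dvd_iff_dvd_coeff _ _).1 ?_
  rw [map_ofNat C 4]
  exact four_dvd_add_pow_five_mul_two_pow_succ_sub _ _ n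
end

section
/- For every natural number n ≥ 0, write r = 2^n. In the polynomial ring ℤ[v, s₁, s₂, u₁, u₂], the element (s₂ − s₁·u₁² + v·s₁·u₁ + u₂)^(2^(n+4)) minus the sum s₂^(16r) + 4·s₁^(4r)·s₂^(12r)·u₁^(8r) + 4·s₂^(12r)·u₂^(4r) + 6·s₁^(8r)·s₂^(8r)·u₁^(16r) + 4·s₁^(4r)·s₂^(8r)·u₁^(8r)·u₂^(4r) + 6·s₂^(8r)·u₂^(8r) + 4·s₁^(12r)·s₂^(4r)·u₁^(24r) + 4·s₁^(8r)·s₂^(4r)·u₁^(16r)·u₂^(4r) + 4·s₁^(4r)·s₂^(4r)·u₁^(8r)·u₂^(8r) + 4·s₂^(4r)·u₂^(12r) + s₁^(16r)·u₁^(32r) + 4·s₁^(12r)·u₁^(24r)·u₂^(4r) + 6·s₁^(8r)·u₁^(16r)·u₂^(8r) + 4·s₁^(4r)·u₁^(8r)·u₂^(12r) + u₂^(16r) lies in the ideal of ℤ[v, s₁, s₂, u₁, u₂] generated by 8 and v⁴. -/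
/-!
Write the base as `a + b` with `a = s₂ - s₁u₁² + u₂` and `b = v s₁ u₁`. Modulo `8` and `b⁴`
the terms of `(a + b)¹⁶` involving `b`, `b²`, `b³` carry the binomial coefficients
`16, 120, 560`, all divisible by `8`, so `(a + b)^(16r) ≡ a^(16r)`. By Frobenius modulo `2`,
`a^(4r) ≡ s₂^(4r) + (s₁u₁²)^(4r) + u₂^(4r)`, and a congruence modulo `2` becomes one modulo `8`
after raising to the fourth power. The listed sum is the fourth power of this trinomial with its
multinomial coefficient `12` reduced to `4` modulo `8`.
-/

open MvPolynomial

section CommRing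

variable {R : Type*} [CommRing R]

theorem two_dvd_add_pow_two_pow_sub (x y : R) (k : ℕ) :
    (2 : R) ∣ (x + y) ^ 2 ^ k - (x ^ 2 ^ k + y ^ 2 ^ k) := by
  induction k with
  | zero => simp
  | succ k ih =>
    obtain ⟨c, hc⟩ := ih
    refine ⟨c * ((x + y) ^ 2 ^ k + x ^ 2 ^ k + y ^ 2 ^ k) + x ^ 2 ^ k * y ^ 2 ^ k, ?_⟩
    rw [pow_succ, pow_mul, pow_mul, pow_mul]
    linear_combination ((x + y) ^ 2 ^ k + x ^ 2 ^ k + y ^ 2 ^ k) * hc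

theorem two_dvd_add_add_pow_two_pow_sub (x y z : R) (k : ℕ) :
    (2 : R) ∣ (x + y + z) ^ 2 ^ k - (x ^ 2 ^ k + y ^ 2 ^ k + z ^ 2 ^ k) := by
  convert dvd_add (two_dvd_add_pow_two_pow_sub (x + y) z k) (two_dvd_add_pow_two_pow_sub x y k)
    using 1
  ring

theorem eight_dvd_sub_add_pow_two_pow_mul_four_sub (x y z : R) {k : ℕ} (hk : k ≠ 0) :
    (8 : R) ∣ (x - y + z) ^ (2 ^ k * 4) - (x ^ 2 ^ k + y ^ 2 ^ k + z ^ 2 ^ k) ^ 4 := by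
  have hfrob : ((2 : ℕ) : R) ∣ (x - y + z) ^ 2 ^ k - (x ^ 2 ^ k + y ^ 2 ^ k + z ^ 2 ^ k) := by
    have := two_dvd_add_add_pow_two_pow_sub x (-y) z k
    rwa [Even.neg_pow (Nat.even_pow.2 ⟨even_two, hk⟩), ← sub_eq_add_neg] at this
  convert dvd_sub_pow_of_dvd_sub hfrob 2 using 1 <;> norm_num [← pow_mul]

theorem add_pow_sixteen_of_eight_eq_zero {a b : R} (h8 : (8 : R) = 0) (hb : b ^ 4 = 0) :
    (a + b) ^ 16 = a ^ 16 := by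
  set d := 4 * a ^ 3 * b + 6 * a ^ 2 * b ^ 2 + 4 * a * b ^ 3
  have h4 : (a + b) ^ 4 = a ^ 4 + d := by linear_combination hb
  have hd2 : d ^ 2 = 0 := by
    linear_combination (2 * a ^ 6 * b ^ 2 + 6 * a ^ 5 * b ^ 3) * h8
      + (68 * a ^ 4 + 48 * a ^ 3 * b + 16 * a ^ 2 * b ^ 2) * hb
  have h4d : 4 * d = 0 := by
    linear_combination (2 * a ^ 3 * b + 3 * a ^ 2 * b ^ 2 + 2 * a * b ^ 3) * h8
  calc (a + b) ^ 16 = (a ^ 4 + d) ^ 4 := by rw [← h4, ← pow_mul]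
    _ = a ^ 16 := by linear_combination a ^ 12 * h4d + (6 * a ^ 8 + 4 * a ^ 4 * d + d ^ 2) * hd2

theorem add_pow_sixteen_mul_sub_pow_mem {I : Ideal R} {a b : R} (h8 : (8 : R) ∈ I)
    (hb : b ^ 4 ∈ I) (m : ℕ) : (a + b) ^ (16 * m) - a ^ (16 * m) ∈ I := by
  have h8' : (8 : R ⧸ I) = 0 := by
    rw [← map_ofNat (Ideal.Quotient.mk I) 8]
    exact Ideal.Quotient.eq_zero_iff_mem.2 h8
  have hb' : Ideal.Quotient.mk I b ^ 4 = 0 := by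
    rw [← map_pow, Ideal.Quotient.eq_zero_iff_mem]
    exact hb
  rw [← Ideal.Quotient.eq_zero_iff_mem, map_sub, sub_eq_zero, map_pow, map_pow, map_add, pow_mul,
    pow_mul, add_pow_sixteen_of_eight_eq_zero h8' hb']

end CommRing

/-- For every `n : ℕ`, with `r = 2^n`, in the polynomial ring
`ℤ[v, s₁, s₂, u₁, u₂]` (with `v = X 0`, `s₁ = X 1`, `s₂ = X 2`, `u₁ = X 3`, `u₂ = X 4`),
the element `(s₂ − s₁·u₁² + v·s₁·u₁ + u₂)^(2^(n+4))` minus the indicated sum lies in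
the ideal generated by `8` and `v⁴`. -/
theorem t2_power_expansion_mod_eight_v_four (n r : ℕ) (hr : r = 2 ^ n) :
    ((X 2 - X 1 * (X 3) ^ 2 + X 0 * X 1 * X 3 + X 4 : MvPolynomial (Fin 5) ℤ) ^ (2 ^ (n + 4))
        - ((X 2) ^ (16 * r)
          + 4 * (X 1) ^ (4 * r) * (X 2) ^ (12 * r) * (X 3) ^ (8 * r)
          + 4 * (X 2) ^ (12 * r) * (X 4) ^ (4 * r)
          + 6 * (X 1) ^ (8 * r) * (X 2) ^ (8 * r) * (X 3) ^ (16 * r)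
          + 4 * (X 1) ^ (4 * r) * (X 2) ^ (8 * r) * (X 3) ^ (8 * r) * (X 4) ^ (4 * r)
          + 6 * (X 2) ^ (8 * r) * (X 4) ^ (8 * r)
          + 4 * (X 1) ^ (12 * r) * (X 2) ^ (4 * r) * (X 3) ^ (24 * r)
          + 4 * (X 1) ^ (8 * r) * (X 2) ^ (4 * r) * (X 3) ^ (16 * r) * (X 4) ^ (4 * r)
          + 4 * (X 1) ^ (4 * r) * (X 2) ^ (4 * r) * (X 3) ^ (8 * r) * (X 4) ^ (8 * r)
          + 4 * (X 2) ^ (4 * r) * (X 4) ^ (12 * r)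
          + (X 1) ^ (16 * r) * (X 3) ^ (32 * r)
          + 4 * (X 1) ^ (12 * r) * (X 3) ^ (24 * r) * (X 4) ^ (4 * r)
          + 6 * (X 1) ^ (8 * r) * (X 3) ^ (16 * r) * (X 4) ^ (8 * r)
          + 4 * (X 1) ^ (4 * r) * (X 3) ^ (8 * r) * (X 4) ^ (12 * r)
          + (X 4) ^ (16 * r)))
      ∈ Ideal.span {(8 : MvPolynomial (Fin 5) ℤ), (X 0) ^ 4} := by
  set I := Ideal.span {(8 : MvPolynomial (Fin 5) ℤ), (X 0) ^ 4}
  have h8 : (8 : MvPolynomial (Fin 5) ℤ) ∈ I := Ideal.subset_span (by simp)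
  have hb : (X 0 * X 1 * X 3 : MvPolynomial (Fin 5) ℤ) ^ 4 ∈ I := by
    rw [mul_pow, mul_pow]
    exact I.mul_mem_right _ (I.mul_mem_right _ (Ideal.subset_span (by simp)))
  set a : MvPolynomial (Fin 5) ℤ := X 2 - X 1 * X 3 ^ 2 + X 4
  set x := (X 2 : MvPolynomial (Fin 5) ℤ) ^ 2 ^ (n + 2)
  set y := (X 1 * X 3 ^ 2 : MvPolynomial (Fin 5) ℤ) ^ 2 ^ (n + 2)
  set z := (X 4 : MvPolynomial (Fin 5) ℤ) ^ 2 ^ (n + 2)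
  have hnil := add_pow_sixteen_mul_sub_pow_mem (a := a) h8 hb r
  have hfrob : a ^ (2 ^ (n + 2) * 4) - (x + y + z) ^ 4 ∈ I :=
    I.mem_of_dvd (eight_dvd_sub_add_pow_two_pow_mul_four_sub _ _ _ (by omega)) h8
  convert add_mem (add_mem hnil hfrob) (I.mul_mem_right (x * y * z * (x + y + z)) h8) using 1
  subst hr
  ring
end

section
/- Let n ≥ 4 be a natural number. For natural numbers e₁ ≤ e₂ ≤ e₃ ≤ e₄ ≤ e₅ ≤ e₆, the equation 2^{e₁} + 2^{e₂} + 2^{e₃} + 2^{e₄} + 2^{e₅} + 2^{e₆} = 3 + 2^{n+2} + 2^{n+3} holds if and only if the tuple (e₁, e₂, e₃, e₄, e₅, e₆) is one of the following four tuples: (0, 0, 0, n+1, n+1, n+3), (0, 0, 0, n+2, n+2, n+2), (0, 1, n, n, n+1, n+3), (0, 1, n+1, n+1, n+2, n+2). -/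
/-!
The right-hand side equals `3 + 3 * 2 ^ (n + 2)`. Reducing modulo 4 forces the smallest exponents
to be `0, 0, 0` or `0, 1`, leaving three or four powers of two with sum `3 * 2 ^ (n + 2)`.
A sorted sum of at most four powers of two with largest term `2 ^ c` lies in `[2 ^ c, 4 * 2 ^ c)`,
so its value determines `c` up to one step; removing the largest term leaves a shorter sum equal
to a power of two, which is handled in the same way.
-/

theorem eq_of_two_pow_add_two_pow_eq_two_pow {a b k : ℕ} (hab : a ≤ b)
    (h : 2 ^ a + 2 ^ b = 2 ^ k) : a = b ∧ k = a + 1 := by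
  have ha : 0 < 2 ^ a := Nat.two_pow_pos a
  have hab' : 2 ^ a ≤ 2 ^ b := Nat.pow_le_pow_right two_pos hab
  have hbk : b < k := (Nat.pow_lt_pow_iff_right one_lt_two).1 (by omega)
  have hkb : k < b + 2 := (Nat.pow_lt_pow_iff_right one_lt_two).1 (by rw [pow_succ, pow_succ]; omega)
  obtain rfl : k = b + 1 := by omega
  obtain rfl : a = b :=
    Nat.pow_right_injective le_rfl (show 2 ^ a = 2 ^ b by rw [pow_succ] at h; omega)
  exact ⟨rfl, rfl⟩

theorem eq_of_two_pow_add_two_pow_add_two_pow_eq_two_pow {a b c k : ℕ} (hab : a ≤ b) (hbc : b ≤ c)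
    (h : 2 ^ a + 2 ^ b + 2 ^ c = 2 ^ k) : a = b ∧ c = a + 1 ∧ k = c + 1 := by
  have ha : 0 < 2 ^ a := Nat.two_pow_pos a
  have hab' : 2 ^ a ≤ 2 ^ b := Nat.pow_le_pow_right two_pos hab
  have hbc' : 2 ^ b ≤ 2 ^ c := Nat.pow_le_pow_right two_pos hbc
  have hck : c < k := (Nat.pow_lt_pow_iff_right one_lt_two).1 (by omega)
  have hkc : k < c + 2 := (Nat.pow_lt_pow_iff_right one_lt_two).1 (by rw [pow_succ, pow_succ]; omega)
  obtain rfl : k = c + 1 := by omega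
  obtain ⟨rfl, rfl⟩ :=
    eq_of_two_pow_add_two_pow_eq_two_pow hab (k := c) (by rw [pow_succ] at h; omega)
  exact ⟨rfl, rfl, rfl⟩

theorem eq_or_eq_succ_of_two_pow_lt_of_lt {m c : ℕ} (h₁ : 2 ^ m < 2 ^ (c + 1))
    (h₂ : 2 ^ c < 2 ^ (m + 2)) : c = m ∨ c = m + 1 := by
  have := (Nat.pow_lt_pow_iff_right one_lt_two).1 h₁
  have := (Nat.pow_lt_pow_iff_right one_lt_two).1 h₂
  omega

theorem eq_of_two_pow_add_two_pow_add_two_pow_eq_three_mul_two_pow {a b c m : ℕ} (hab : a ≤ b)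
    (hbc : b ≤ c) (h : 2 ^ a + 2 ^ b + 2 ^ c = 3 * 2 ^ m) :
    (a + 1 = m ∧ b + 1 = m ∧ c = m + 1) ∨ (a = m ∧ b = m ∧ c = m) := by
  have ha : 0 < 2 ^ a := Nat.two_pow_pos a
  have hab' : 2 ^ a ≤ 2 ^ b := Nat.pow_le_pow_right two_pos hab
  have hbc' : 2 ^ b ≤ 2 ^ c := Nat.pow_le_pow_right two_pos hbc
  have hc : 2 ^ (c + 1) = 2 * 2 ^ c := by ring
  have hm : 2 ^ (m + 2) = 4 * 2 ^ m := by ring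
  rcases eq_or_eq_succ_of_two_pow_lt_of_lt (m := m) (c := c) (by omega) (by omega) with rfl | rfl
  · have := eq_of_two_pow_add_two_pow_eq_two_pow hab (k := c + 1) (by omega)
    omega
  · have := eq_of_two_pow_add_two_pow_eq_two_pow hab (k := m) (by rw [pow_succ] at h; omega)
    omega

theorem eq_of_two_pow_add_two_pow_add_two_pow_add_two_pow_eq_three_mul_two_pow {a b c d m : ℕ}
    (hab : a ≤ b) (hbc : b ≤ c) (hcd : c ≤ d) (h : 2 ^ a + 2 ^ b + 2 ^ c + 2 ^ d = 3 * 2 ^ m) :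
    (a + 2 = m ∧ b + 2 = m ∧ c + 1 = m ∧ d = m + 1) ∨ (a + 1 = m ∧ b + 1 = m ∧ c = m ∧ d = m) := by
  have ha : 0 < 2 ^ a := Nat.two_pow_pos a
  have hab' : 2 ^ a ≤ 2 ^ b := Nat.pow_le_pow_right two_pos hab
  have hbc' : 2 ^ b ≤ 2 ^ c := Nat.pow_le_pow_right two_pos hbc
  have hcd' : 2 ^ c ≤ 2 ^ d := Nat.pow_le_pow_right two_pos hcd
  have hd : 2 ^ (d + 1) = 2 * 2 ^ d := by ring
  have hm : 2 ^ (m + 2) = 4 * 2 ^ m := by ring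
  rcases eq_or_eq_succ_of_two_pow_lt_of_lt (m := m) (c := d) (by omega) (by omega) with rfl | rfl
  · have := eq_of_two_pow_add_two_pow_add_two_pow_eq_two_pow hab hbc (k := d + 1) (by omega)
    omega
  · have := eq_of_two_pow_add_two_pow_add_two_pow_eq_two_pow hab hbc (k := m)
      (by rw [pow_succ] at h; omega)
    omega

theorem two_pow_cases_mod_four (e : ℕ) :
    e = 0 ∧ 2 ^ e = 1 ∨ e = 1 ∧ 2 ^ e = 2 ∨ 2 ≤ e ∧ 4 ∣ 2 ^ e := by
  rcases e with _ | _ | e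
  · simp
  · simp
  · exact Or.inr (Or.inr ⟨by omega, Nat.pow_dvd_pow 2 (show 2 ≤ e + 2 by omega)⟩)

theorem low_exponents_of_six_two_pow_sum_eq_three_add_four_mul {e₁ e₂ e₃ e₄ e₅ e₆ x : ℕ}
    (h₁₂ : e₁ ≤ e₂) (h₂₃ : e₂ ≤ e₃) (h₃₄ : e₃ ≤ e₄) (h₄₅ : e₄ ≤ e₅) (h₅₆ : e₅ ≤ e₆)
    (h : 2 ^ e₁ + 2 ^ e₂ + 2 ^ e₃ + 2 ^ e₄ + 2 ^ e₅ + 2 ^ e₆ = 3 + 4 * x) :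
    e₁ = 0 ∧ (e₂ = 0 ∧ e₃ = 0 ∨ e₂ = 1) := by
  have := two_pow_cases_mod_four e₁
  have := two_pow_cases_mod_four e₂
  have := two_pow_cases_mod_four e₃
  have := two_pow_cases_mod_four e₄
  have := two_pow_cases_mod_four e₅
  have := two_pow_cases_mod_four e₆
  omega

theorem six_powers_of_two_sum_eq_three_general (n : ℕ)
    (e₁ e₂ e₃ e₄ e₅ e₆ : ℕ)
    (h₁₂ : e₁ ≤ e₂) (h₂₃ : e₂ ≤ e₃) (h₃₄ : e₃ ≤ e₄) (h₄₅ : e₄ ≤ e₅) (h₅₆ : e₅ ≤ e₆) :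
    2 ^ e₁ + 2 ^ e₂ + 2 ^ e₃ + 2 ^ e₄ + 2 ^ e₅ + 2 ^ e₆ = 3 + 2 ^ (n + 2) + 2 ^ (n + 3) ↔
      (e₁, e₂, e₃, e₄, e₅, e₆) = (0, 0, 0, n + 1, n + 1, n + 3) ∨
      (e₁, e₂, e₃, e₄, e₅, e₆) = (0, 0, 0, n + 2, n + 2, n + 2) ∨
      (e₁, e₂, e₃, e₄, e₅, e₆) = (0, 1, n, n, n + 1, n + 3) ∨
      (e₁, e₂, e₃, e₄, e₅, e₆) = (0, 1, n + 1, n + 1, n + 2, n + 2) := by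
  have hrhs : 3 + 2 ^ (n + 2) + 2 ^ (n + 3) = 3 + 3 * 2 ^ (n + 2) := by ring
  rw [hrhs]
  constructor
  · intro h
    simp only [Prod.mk.injEq]
    obtain ⟨rfl, ⟨rfl, rfl⟩ | rfl⟩ := low_exponents_of_six_two_pow_sum_eq_three_add_four_mul
      h₁₂ h₂₃ h₃₄ h₄₅ h₅₆ (x := 3 * 2 ^ n) (by rw [h]; ring)
    · have := eq_of_two_pow_add_two_pow_add_two_pow_eq_three_mul_two_pow h₄₅ h₅₆
        (m := n + 2) (by simp only [pow_zero] at h; omega)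
      omega
    · have := eq_of_two_pow_add_two_pow_add_two_pow_add_two_pow_eq_three_mul_two_pow h₃₄ h₄₅ h₅₆
        (m := n + 2) (by simp only [pow_zero, pow_one] at h; omega)
      omega
  · rintro (h | h | h | h) <;> simp only [Prod.mk.injEq] at h <;>
      obtain ⟨rfl, rfl, rfl, rfl, rfl, rfl⟩ := h <;> ring

/-- Let `n ≥ 4`. For naturals `e₁ ≤ e₂ ≤ e₃ ≤ e₄ ≤ e₅ ≤ e₆`,
one has `2^e₁ + 2^e₂ + 2^e₃ + 2^e₄ + 2^e₅ + 2^e₆ = 3 + 2^(n+2) + 2^(n+3)` iff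
the tuple `(e₁,…,e₆)` is one of the four listed tuples. -/
theorem six_powers_of_two_sum_eq_three (n : ℕ) (hn : 4 ≤ n)
    (e₁ e₂ e₃ e₄ e₅ e₆ : ℕ)
    (h₁₂ : e₁ ≤ e₂) (h₂₃ : e₂ ≤ e₃) (h₃₄ : e₃ ≤ e₄) (h₄₅ : e₄ ≤ e₅) (h₅₆ : e₅ ≤ e₆) :
    2 ^ e₁ + 2 ^ e₂ + 2 ^ e₃ + 2 ^ e₄ + 2 ^ e₅ + 2 ^ e₆ = 3 + 2 ^ (n + 2) + 2 ^ (n + 3) ↔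
      (e₁, e₂, e₃, e₄, e₅, e₆) = (0, 0, 0, n + 1, n + 1, n + 3) ∨
      (e₁, e₂, e₃, e₄, e₅, e₆) = (0, 0, 0, n + 2, n + 2, n + 2) ∨
      (e₁, e₂, e₃, e₄, e₅, e₆) = (0, 1, n, n, n + 1, n + 3) ∨
      (e₁, e₂, e₃, e₄, e₅, e₆) = (0, 1, n + 1, n + 1, n + 2, n + 2) :=
  six_powers_of_two_sum_eq_three_general n e₁ e₂ e₃ e₄ e₅ e₆ h₁₂ h₂₃ h₃₄ h₄₅ h₅₆
end

section
/- Let n ≥ 4 be a natural number. For natural numbers e₁ ≤ e₂ ≤ e₃ ≤ e₄ ≤ e₅ ≤ e₆, the equation 2^{e₁} + 2^{e₂} + 2^{e₃} + 2^{e₄} + 2^{e₅} + 2^{e₆} = 4 + 2^{n+2} + 2^{n+3} holds if and only if the tuple (e₁, e₂, e₃, e₄, e₅, e₆) is one of the following nine tuples: (0, 0, 0, 0, n+2, n+3), (0, 0, 1, n+1, n+1, n+3), (0, 0, 1, n+2, n+2, n+2), (1, 1, n, n, n+1, n+3), (1, 1, n+1, n+1, n+2, n+2), (2, n−1, n−1,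 n, n+1, n+3), (2, n, n, n, n, n+3), (2, n, n, n+1, n+2, n+2), (2, n+1, n+1, n+1, n+1, n+2). -/
/-!
Modulo 8 the right-hand side is 4, so parity and divisibility by 4 and 8 force the exponents
below 3 to be `0,0,0,0`, `0,0,1`, `1,1` or `2`, and the remaining two to five powers of two add
up to `3 * 2^(n+2)`. A sorted sum of `k ≤ 5` powers of two equal to `2^t` or `3 * 2^t` is then
classified by its largest term: being at most the sum and at least a `k`-th of it, the largest
exponent takes one of two values, and what remains is a sum of `k - 1` powers of the same two
shapes.
-/

theorem two_two_pows_eq_two_pow {a b j : ℕ} (hab : a ≤ b) (h : 2 ^ a + 2 ^ b = 2 ^ (j + 1)) :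
    a = j ∧ b = j := by
  have := Nat.two_pow_pos a
  have := Nat.pow_le_pow_right two_pos hab
  have hb₁ : b < j + 1 := (Nat.pow_lt_pow_iff_right one_lt_two).1 (by omega)
  have hb₂ : j < b + 1 := (Nat.pow_lt_pow_iff_right one_lt_two).1 (by omega)
  obtain rfl : b = j := by omega
  exact ⟨Nat.pow_right_injective le_rfl (show 2 ^ a = 2 ^ b by omega), rfl⟩

theorem two_two_pows_eq_three_mul_two_pow {a b j : ℕ} (hab : a ≤ b)
    (h : 2 ^ a + 2 ^ b = 3 * 2 ^ j) : a = j ∧ b = j + 1 := by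
  have := Nat.two_pow_pos a
  have := Nat.pow_le_pow_right two_pos hab
  have hb₁ : b < j + 2 := (Nat.pow_lt_pow_iff_right one_lt_two).1 (by simp only [pow_succ]; omega)
  have hb₂ : j < b := (Nat.pow_lt_pow_iff_right one_lt_two).1 (by omega)
  obtain rfl : b = j + 1 := by omega
  simp only [pow_succ] at h
  exact ⟨Nat.pow_right_injective le_rfl (show 2 ^ a = 2 ^ j by omega), rfl⟩

theorem three_two_pows_eq_two_pow {a b c j : ℕ} (hab : a ≤ b) (hbc : b ≤ c)
    (h : 2 ^ a + 2 ^ b + 2 ^ c = 2 ^ (j + 2)) : a = j ∧ b = j ∧ c = j + 1 := by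
  have := Nat.two_pow_pos a
  have := Nat.pow_le_pow_right two_pos hab
  have := Nat.pow_le_pow_right two_pos hbc
  simp only [pow_succ] at h
  have hc₁ : c < j + 2 := (Nat.pow_lt_pow_iff_right one_lt_two).1 (by simp only [pow_succ]; omega)
  have hc₂ : j < c := (Nat.pow_lt_pow_iff_right one_lt_two).1 (by omega)
  obtain rfl : c = j + 1 := by omega
  obtain ⟨rfl, rfl⟩ := two_two_pows_eq_two_pow (j := j) hab (by simp only [pow_succ]; omega)
  exact ⟨rfl, rfl, rfl⟩

theorem three_two_pows_eq_three_mul_two_pow {a b c j : ℕ} (hab : a ≤ b) (hbc : b ≤ c)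
    (h : 2 ^ a + 2 ^ b + 2 ^ c = 3 * 2 ^ (j + 1)) :
    a = j ∧ b = j ∧ c = j + 2 ∨ a = j + 1 ∧ b = j + 1 ∧ c = j + 1 := by
  have := Nat.two_pow_pos a
  have := Nat.pow_le_pow_right two_pos hab
  have := Nat.pow_le_pow_right two_pos hbc
  simp only [pow_succ] at h
  have hc₁ : c < j + 3 := (Nat.pow_lt_pow_iff_right one_lt_two).1 (by simp only [pow_succ]; omega)
  have hc₂ : j < c := (Nat.pow_lt_pow_iff_right one_lt_two).1 (by omega)
  obtain rfl | rfl : c = j + 1 ∨ c = j + 2 := by omega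
  · obtain ⟨rfl, rfl⟩ := two_two_pows_eq_two_pow (j := j + 1) hab (by simp only [pow_succ]; omega)
    exact .inr ⟨rfl, rfl, rfl⟩
  · obtain ⟨rfl, rfl⟩ :=
      two_two_pows_eq_two_pow (j := j) hab (by simp only [pow_succ] at h ⊢; omega)
    exact .inl ⟨rfl, rfl, rfl⟩

theorem four_two_pows_eq_two_pow {a b c d j : ℕ} (hab : a ≤ b) (hbc : b ≤ c) (hcd : c ≤ d)
    (h : 2 ^ a + 2 ^ b + 2 ^ c + 2 ^ d = 2 ^ (j + 3)) :
    a = j ∧ b = j ∧ c = j + 1 ∧ d = j + 2 ∨ a = j + 1 ∧ b = j + 1 ∧ c = j + 1 ∧ d = j + 1 := by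
  have := Nat.two_pow_pos a
  have := Nat.pow_le_pow_right two_pos hab
  have := Nat.pow_le_pow_right two_pos hbc
  have := Nat.pow_le_pow_right two_pos hcd
  simp only [pow_succ] at h
  have hd₁ : d < j + 3 := (Nat.pow_lt_pow_iff_right one_lt_two).1 (by simp only [pow_succ]; omega)
  have hd₂ : j < d := (Nat.pow_lt_pow_iff_right one_lt_two).1 (by omega)
  obtain rfl | rfl : d = j + 1 ∨ d = j + 2 := by omega
  · obtain ⟨-, -, hc⟩ | ⟨rfl, rfl, rfl⟩ :=
      three_two_pows_eq_three_mul_two_pow (j := j) hab hbc (by simp only [pow_succ] at h ⊢; omega)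
    · omega
    · exact .inr ⟨rfl, rfl, rfl, rfl⟩
  · obtain ⟨rfl, rfl, rfl⟩ :=
      three_two_pows_eq_two_pow (j := j) hab hbc (by simp only [pow_succ] at h ⊢; omega)
    exact .inl ⟨rfl, rfl, rfl, rfl⟩

theorem four_two_pows_eq_three_mul_two_pow {a b c d j : ℕ} (hab : a ≤ b) (hbc : b ≤ c)
    (hcd : c ≤ d) (h : 2 ^ a + 2 ^ b + 2 ^ c + 2 ^ d = 3 * 2 ^ (j + 2)) :
    a = j ∧ b = j ∧ c = j + 1 ∧ d = j + 3 ∨ a = j + 1 ∧ b = j + 1 ∧ c = j + 2 ∧ d = j + 2 := by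
  have := Nat.two_pow_pos a
  have := Nat.pow_le_pow_right two_pos hab
  have := Nat.pow_le_pow_right two_pos hbc
  have := Nat.pow_le_pow_right two_pos hcd
  simp only [pow_succ] at h
  have hd₁ : d < j + 4 := (Nat.pow_lt_pow_iff_right one_lt_two).1 (by simp only [pow_succ]; omega)
  have hd₂ : j + 1 < d := (Nat.pow_lt_pow_iff_right one_lt_two).1 (by simp only [pow_succ]; omega)
  obtain rfl | rfl : d = j + 2 ∨ d = j + 3 := by omega
  · obtain ⟨rfl, rfl, rfl⟩ :=
      three_two_pows_eq_two_pow (j := j + 1) hab hbc (by simp only [pow_succ] at h ⊢; omega)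
    exact .inr ⟨rfl, rfl, rfl, rfl⟩
  · obtain ⟨rfl, rfl, rfl⟩ :=
      three_two_pows_eq_two_pow (j := j) hab hbc (by simp only [pow_succ] at h ⊢; omega)
    exact .inl ⟨rfl, rfl, rfl, rfl⟩

theorem five_two_pows_eq_three_mul_two_pow {a b c d e j : ℕ} (hab : a ≤ b) (hbc : b ≤ c)
    (hcd : c ≤ d) (hde : d ≤ e) (h : 2 ^ a + 2 ^ b + 2 ^ c + 2 ^ d + 2 ^ e = 3 * 2 ^ (j + 3)) :
    a = j ∧ b = j ∧ c = j + 1 ∧ d = j + 2 ∧ e = j + 4 ∨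
      a = j + 1 ∧ b = j + 1 ∧ c = j + 1 ∧ d = j + 1 ∧ e = j + 4 ∨
      a = j + 1 ∧ b = j + 1 ∧ c = j + 2 ∧ d = j + 3 ∧ e = j + 3 ∨
      a = j + 2 ∧ b = j + 2 ∧ c = j + 2 ∧ d = j + 2 ∧ e = j + 3 := by
  have := Nat.two_pow_pos a
  have := Nat.pow_le_pow_right two_pos hab
  have := Nat.pow_le_pow_right two_pos hbc
  have := Nat.pow_le_pow_right two_pos hcd
  have := Nat.pow_le_pow_right two_pos hde
  simp only [pow_succ] at h
  have he₁ : e < j + 5 := (Nat.pow_lt_pow_iff_right one_lt_two).1 (by simp only [pow_succ]; omega)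
  have he₂ : j + 2 < e := (Nat.pow_lt_pow_iff_right one_lt_two).1 (by simp only [pow_succ]; omega)
  obtain rfl | rfl : e = j + 3 ∨ e = j + 4 := by omega
  · obtain ⟨rfl, rfl, rfl, rfl⟩ | ⟨rfl, rfl, rfl, rfl⟩ :=
      four_two_pows_eq_two_pow (j := j + 1) hab hbc hcd (by simp only [pow_succ] at h ⊢; omega)
    · exact .inr (.inr (.inl ⟨rfl, rfl, rfl, rfl, rfl⟩))
    · exact .inr (.inr (.inr ⟨rfl, rfl, rfl, rfl, rfl⟩))
  · obtain ⟨rfl, rfl, rfl, rfl⟩ | ⟨rfl, rfl, rfl, rfl⟩ :=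
      four_two_pows_eq_two_pow (j := j) hab hbc hcd (by simp only [pow_succ] at h ⊢; omega)
    · exact .inl ⟨rfl, rfl, rfl, rfl, rfl⟩
    · exact .inr (.inl ⟨rfl, rfl, rfl, rfl, rfl⟩)

theorem six_two_pows_eq_four_add {e₁ e₂ e₃ e₄ e₅ e₆ x : ℕ}
    (h₁₂ : e₁ ≤ e₂) (h₂₃ : e₂ ≤ e₃) (h₃₄ : e₃ ≤ e₄) (h₄₅ : e₄ ≤ e₅) (h₅₆ : e₅ ≤ e₆)
    (hx : 8 ∣ x) (h : 2 ^ e₁ + 2 ^ e₂ + 2 ^ e₃ + 2 ^ e₄ + 2 ^ e₅ + 2 ^ e₆ = 4 + x) :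
    e₁ = 0 ∧ e₂ = 0 ∧ e₃ = 0 ∧ e₄ = 0 ∧ 2 ^ e₅ + 2 ^ e₆ = x ∨
      e₁ = 0 ∧ e₂ = 0 ∧ e₃ = 1 ∧ 2 ^ e₄ + 2 ^ e₅ + 2 ^ e₆ = x ∨
      e₁ = 1 ∧ e₂ = 1 ∧ 2 ^ e₃ + 2 ^ e₄ + 2 ^ e₅ + 2 ^ e₆ = x ∨
      e₁ = 2 ∧ 2 ^ e₂ + 2 ^ e₃ + 2 ^ e₄ + 2 ^ e₅ + 2 ^ e₆ = x := by
  have hdvd {k e : ℕ} (he : k ≤ e) : 2 ^ k ∣ 2 ^ e := pow_dvd_pow 2 he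
  have tail₄ {k : ℕ} (hk : k ≤ e₄) : 2 ^ k ∣ 2 ^ e₄ + 2 ^ e₅ + 2 ^ e₆ :=
    ((hdvd hk).add (hdvd (hk.trans h₄₅))).add (hdvd (hk.trans (h₄₅.trans h₅₆)))
  have tail₃ {k : ℕ} (hk : k ≤ e₃) : 2 ^ k ∣ 2 ^ e₃ + (2 ^ e₄ + 2 ^ e₅ + 2 ^ e₆) :=
    (hdvd hk).add (tail₄ (hk.trans h₃₄))
  have tail₂ {k : ℕ} (hk : k ≤ e₂) : 2 ^ k ∣ 2 ^ e₂ + (2 ^ e₃ + (2 ^ e₄ + 2 ^ e₅ + 2 ^ e₆)) :=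
    (hdvd hk).add (tail₃ (hk.trans h₂₃))
  rcases (by omega : e₁ = 0 ∨ e₁ = 1 ∨ e₁ = 2 ∨ 3 ≤ e₁) with rfl | rfl | rfl | h₁
  · obtain rfl : e₂ = 0 := by
      by_contra! h₂
      have := tail₂ (k := 1) (by omega)
      omega
    rcases (by omega : e₃ = 0 ∨ e₃ = 1 ∨ 2 ≤ e₃) with rfl | rfl | h₃
    · obtain rfl : e₄ = 0 := by
        by_contra! h₄
        have := tail₄ (k := 1) (by omega)
        omega
      omega
    · omega
    · have := tail₃ h₃
      omega
  · obtain rfl : e₂ = 1 := by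
      by_contra! h₂
      have := tail₂ (k := 2) (by omega)
      omega
    omega
  · omega
  · have := hdvd h₁
    have := tail₂ (h₁.trans h₁₂)
    omega

/-- Let `n ≥ 4`. For naturals `e₁ ≤ e₂ ≤ e₃ ≤ e₄ ≤ e₅ ≤ e₆`,
one has `2^e₁ + … + 2^e₆ = 4 + 2^(n+2) + 2^(n+3)` iff the tuple `(e₁,…,e₆)`
is one of the nine listed tuples. -/
theorem six_powers_of_two_sum_eq_four (n : ℕ) (hn : 4 ≤ n)
    (e₁ e₂ e₃ e₄ e₅ e₆ : ℕ)
    (h₁₂ : e₁ ≤ e₂) (h₂₃ : e₂ ≤ e₃) (h₃₄ : e₃ ≤ e₄) (h₄₅ : e₄ ≤ e₅) (h₅₆ : e₅ ≤ e₆) :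
    2 ^ e₁ + 2 ^ e₂ + 2 ^ e₃ + 2 ^ e₄ + 2 ^ e₅ + 2 ^ e₆ = 4 + 2 ^ (n + 2) + 2 ^ (n + 3) ↔
      (e₁, e₂, e₃, e₄, e₅, e₆) = (0, 0, 0, 0, n + 2, n + 3) ∨
      (e₁, e₂, e₃, e₄, e₅, e₆) = (0, 0, 1, n + 1, n + 1, n + 3) ∨
      (e₁, e₂, e₃, e₄, e₅, e₆) = (0, 0, 1, n + 2, n + 2, n + 2) ∨
      (e₁, e₂, e₃, e₄, e₅, e₆) = (1, 1, n, n, n + 1, n + 3) ∨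
      (e₁, e₂, e₃, e₄, e₅, e₆) = (1, 1, n + 1, n + 1, n + 2, n + 2) ∨
      (e₁, e₂, e₃, e₄, e₅, e₆) = (2, n - 1, n - 1, n, n + 1, n + 3) ∨
      (e₁, e₂, e₃, e₄, e₅, e₆) = (2, n, n, n, n, n + 3) ∨
      (e₁, e₂, e₃, e₄, e₅, e₆) = (2, n, n, n + 1, n + 2, n + 2) ∨
      (e₁, e₂, e₃, e₄, e₅, e₆) = (2, n + 1, n + 1, n + 1, n + 1, n + 2) := by
  obtain ⟨m, rfl⟩ : ∃ m, n = m + 1 := ⟨n - 1, by omega⟩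
  have high : 2 ^ (m + 1 + 2) + 2 ^ (m + 1 + 3) = 3 * 2 ^ (m + 3) := by ring
  simp only [Prod.mk.injEq, Nat.add_sub_cancel]
  constructor
  · intro h
    rcases six_two_pows_eq_four_add h₁₂ h₂₃ h₃₄ h₄₅ h₅₆ ⟨3 * 2 ^ m, by ring⟩
      (h.trans (add_assoc _ _ _)) with
      ⟨rfl, rfl, rfl, rfl, hx⟩ | ⟨rfl, rfl, rfl, hx⟩ | ⟨rfl, rfl, hx⟩ | ⟨rfl, hx⟩
    · obtain ⟨rfl, rfl⟩ := two_two_pows_eq_three_mul_two_pow h₅₆ (hx.trans high)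
      simp
    · obtain ⟨rfl, rfl, rfl⟩ | ⟨rfl, rfl, rfl⟩ :=
        three_two_pows_eq_three_mul_two_pow h₄₅ h₅₆ (hx.trans high) <;> simp
    · obtain ⟨rfl, rfl, rfl, rfl⟩ | ⟨rfl, rfl, rfl, rfl⟩ :=
        four_two_pows_eq_three_mul_two_pow h₃₄ h₄₅ h₅₆ (hx.trans high) <;> simp
    · obtain ⟨rfl, rfl, rfl, rfl, rfl⟩ | ⟨rfl, rfl, rfl, rfl, rfl⟩ | ⟨rfl, rfl, rfl, rfl, rfl⟩ |
          ⟨rfl, rfl, rfl, rfl, rfl⟩ :=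
        five_two_pows_eq_three_mul_two_pow h₂₃ h₃₄ h₄₅ h₅₆ (hx.trans high) <;> simp
  · rintro (h | h | h | h | h | h | h | h | h) <;>
      obtain ⟨rfl, rfl, rfl, rfl, rfl, rfl⟩ := h <;> ring
end

section
/- Let j ≥ 3 be a natural number and set p = 2^(j−3). In the polynomial ring ℤ[w, x, y, z] one has the congruence T_j(w, x) · T_{j+1}(y, z) ≡ 4·w^{4p}x^{4p}y^{2p}z^{14p} + 4·w^{2p}x^{6p}y^{4p}z^{12p} + 2·w^{4p}x^{4p}y^{4p}z^{12p} + 4·w^{6p}x^{2p}y^{4p}z^{12p} + 4·w^{4p}x^{4p}y^{6p}z^{10p} + 4·w^{p}x^{7p}y^{8p}z^{8p} + 2·w^{2p}x^{6p}y^{8p}z^{8p} + 4·w^{3p}x^{5p}y^{8p}z^{8p} + w^{4p}x^{4p}y^{8p}z^{8p} + 4·w^{5p}x^{3p}y^{8p}z^{8p} + 2·w^{6p}x^{2p}y^{8p}z^{8p} + 4·w^{7p}x^{p}y^{8p}z^{8p} + 4·w^{4p}x^{4p}y^{10p}z^{6p} + 4·w^{2p}x^{6p}y^{12p}z^{4p}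 + 2·w^{4p}x^{4p}y^{12p}z^{4p} + 4·w^{6p}x^{2p}y^{12p}z^{4p} + 4·w^{4p}x^{4p}y^{14p}z^{2p} modulo 8. -/
open MvPolynomial

set_option maxHeartbeats 1000000

/-- For `m ≥ 1`, the polynomial `T_m(u, w) = ∑_{i=1}^{2^m − 1} (C(2^m, i)/2)·u^i·w^(2^m − i)`,
interpreted in any commutative ring. (The binomial coefficient `C(2^m, i)` is even for
`0 < i < 2^m`, so natural-number division by `2` is exact.) -/
noncomputable def TPoly {R : Type*} [CommRing R] (m : ℕ) (u w : R) : R :=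
  ∑ i ∈ Finset.Ico 1 (2 ^ m), ((Nat.choose (2 ^ m) i / 2 : ℕ) : R) * u ^ i * w ^ (2 ^ m - i)

/-
Since `2·T_m(u, w) = (u + w)^(2^m) − u^(2^m) − w^(2^m)` and `(u + w)^(2^t) ≡ u^(2^t) + w^(2^t)`
modulo `2`, raising to the eighth power gives a congruence modulo `16`, and halving it yields
`T_(t+3)(u, w) ≡ T_3(u^(2^t), w^(2^t))` modulo `8`.
Reducing the coefficients `4, 14, 28, 35, …` of `T_3` modulo `8` leaves
`T_3(a, b) ≡ 3A + 6B + 4C` with `A = a⁴b⁴`, `B = a²b²(a⁴ + b⁴)`, `C = ab(a⁶ + a⁴b² + a²b⁴ + b⁶)`,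
and the product of two such residues is `AA' + 2(AB' + BA') + 4(AC' + CA' + BB')` modulo `8`.
-/

section TPoly

variable {R : Type*} [CommRing R]

theorem two_mul_TPoly (m : ℕ) (u w : R) :
    2 * TPoly m u w = (u + w) ^ 2 ^ m - u ^ 2 ^ m - w ^ 2 ^ m := by
  have h2m : 1 ≤ 2 ^ m := Nat.one_le_two_pow
  calc 2 * TPoly m u w
      = ∑ i ∈ Finset.Ico 1 (2 ^ m), u ^ i * w ^ (2 ^ m - i) * ((2 ^ m).choose i : R) := by
        rw [TPoly, Finset.mul_sum]
        refine Finset.sum_congr rfl fun i hi => ?_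
        rw [Finset.mem_Ico] at hi
        obtain ⟨k, hk⟩ : 2 ∣ (2 ^ m).choose i :=
          Nat.Prime.dvd_choose_pow Nat.prime_two (by omega) (by omega)
        rw [hk, Nat.mul_div_cancel_left _ two_pos]
        push_cast
        ring
    _ = (u + w) ^ 2 ^ m - u ^ 2 ^ m - w ^ 2 ^ m := by
        rw [add_pow, Finset.range_eq_Ico, Finset.sum_eq_sum_Ico_succ_bot (Nat.succ_pos _),
          Finset.sum_Ico_succ_top h2m]
        simp only [pow_zero, Nat.sub_zero, Nat.choose_zero_right, Nat.cast_one, mul_one,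
          one_mul, Nat.sub_self, Nat.choose_self]
        ring

theorem sixteen_dvd_add_pow_sub (t : ℕ) (u w : R) :
    (16 : R) ∣ (u + w) ^ 2 ^ (t + 3) - (u ^ 2 ^ t + w ^ 2 ^ t) ^ 8 := by
  have h2 : ((2 : ℕ) : R) ∣ (u + w) ^ 2 ^ t - (u ^ 2 ^ t + w ^ 2 ^ t) :=
    ⟨TPoly t u w, by push_cast; rw [two_mul_TPoly]; ring⟩
  have h16 := dvd_sub_pow_of_dvd_sub h2 3
  norm_num [pow_add, pow_mul] at h16 ⊢
  exact h16

theorem eight_dvd_TPoly_add_three_sub [NoZeroDivisors R] [CharZero R] (t : ℕ) (u w : R) :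
    (8 : R) ∣ TPoly (t + 3) u w - TPoly 3 (u ^ 2 ^ t) (w ^ 2 ^ t) := by
  obtain ⟨e, he⟩ := sixteen_dvd_add_pow_sub t u w
  refine ⟨e, mul_left_cancel₀ (two_ne_zero : (2 : R) ≠ 0) ?_⟩
  have hu : (u ^ 2 ^ t) ^ 2 ^ 3 = u ^ 2 ^ (t + 3) := by rw [← pow_mul, ← pow_add]
  have hw : (w ^ 2 ^ t) ^ 2 ^ 3 = w ^ 2 ^ (t + 3) := by rw [← pow_mul, ← pow_add]
  rw [mul_sub, two_mul_TPoly, two_mul_TPoly, hu, hw]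
  linear_combination he

theorem TPoly_three (a b : R) :
    TPoly 3 a b = 4 * a * b ^ 7 + 14 * a ^ 2 * b ^ 6 + 28 * a ^ 3 * b ^ 5 + 35 * a ^ 4 * b ^ 4
      + 28 * a ^ 5 * b ^ 3 + 14 * a ^ 6 * b ^ 2 + 4 * a ^ 7 * b := by
  simp [TPoly, Finset.sum_Ico_eq_sum_range, Finset.sum_range_succ, Nat.choose]

theorem eight_dvd_TPoly_three_sub (a b : R) :
    (8 : R) ∣ TPoly 3 a b - (3 * (a ^ 4 * b ^ 4) + 6 * (a ^ 2 * b ^ 2 * (a ^ 4 + b ^ 4))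
      + 4 * (a * b * (a ^ 6 + a ^ 4 * b ^ 2 + a ^ 2 * b ^ 4 + b ^ 6))) :=
  ⟨a ^ 2 * b ^ 6 + 3 * a ^ 3 * b ^ 5 + 4 * a ^ 4 * b ^ 4 + 3 * a ^ 5 * b ^ 3 + a ^ 6 * b ^ 2, by
    rw [TPoly_three]; ring⟩

theorem eight_dvd_TPoly_sub_residue [NoZeroDivisors R] [CharZero R] {t p : ℕ} (hp : p = 2 ^ t)
    (u w : R) :
    (8 : R) ∣ TPoly (t + 3) u w - (3 * ((u ^ p) ^ 4 * (w ^ p) ^ 4)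
      + 6 * ((u ^ p) ^ 2 * (w ^ p) ^ 2 * ((u ^ p) ^ 4 + (w ^ p) ^ 4))
      + 4 * (u ^ p * w ^ p * ((u ^ p) ^ 6 + (u ^ p) ^ 4 * (w ^ p) ^ 2
        + (u ^ p) ^ 2 * (w ^ p) ^ 4 + (w ^ p) ^ 6))) := by
  subst hp
  exact sub_add_sub_cancel _ (TPoly 3 (u ^ 2 ^ t) (w ^ 2 ^ t)) _ ▸
    dvd_add (eight_dvd_TPoly_add_three_sub t u w) (eight_dvd_TPoly_three_sub _ _)

theorem eight_dvd_mul_sub_of_residues {x x' A B C A' B' C' : R}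
    (h : (8 : R) ∣ x - (3 * A + 6 * B + 4 * C)) (h' : (8 : R) ∣ x' - (3 * A' + 6 * B' + 4 * C')) :
    (8 : R) ∣ x * x' - (A * A' + 2 * (A * B' + B * A') + 4 * (A * C' + C * A' + B * B')) := by
  obtain ⟨e, he⟩ := h
  obtain ⟨e', he'⟩ := h'
  refine ⟨e * x' + (3 * A + 6 * B + 4 * C) * e' + A * A' + 2 * (A * B' + B * A')
    + (A * C' + C * A') + 4 * B * B' + 3 * (B * C' + C * B') + 2 * C * C', ?_⟩
  linear_combination x' * he + (3 * A + 6 * B + 4 * C) * he'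

end TPoly

/-- Let `j ≥ 3` and `p = 2^(j−3)`. In `ℤ[w, x, y, z]`
(with `w = X 0`, `x = X 1`, `y = X 2`, `z = X 3`), the product
`T_j(w, x) · T_{j+1}(y, z)` is congruent modulo `8` to the indicated sum of
17 monomials (i.e. every coefficient of the difference is divisible by 8). -/
theorem T_product_expansion_mod_eight (j : ℕ) (hj : 3 ≤ j) (p : ℕ) (hp : p = 2 ^ (j - 3)) :
    ∀ m : Fin 4 →₀ ℕ, (8 : ℤ) ∣ MvPolynomial.coeff m
      (TPoly j (X 0 : MvPolynomial (Fin 4) ℤ) (X 1) * TPoly (j + 1) (X 2) (X 3)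
        - (4 * (X 0) ^ (4 * p) * (X 1) ^ (4 * p) * (X 2) ^ (2 * p) * (X 3) ^ (14 * p)
          + 4 * (X 0) ^ (2 * p) * (X 1) ^ (6 * p) * (X 2) ^ (4 * p) * (X 3) ^ (12 * p)
          + 2 * (X 0) ^ (4 * p) * (X 1) ^ (4 * p) * (X 2) ^ (4 * p) * (X 3) ^ (12 * p)
          + 4 * (X 0) ^ (6 * p) * (X 1) ^ (2 * p) * (X 2) ^ (4 * p) * (X 3) ^ (12 * p)
          + 4 * (X 0) ^ (4 * p) * (X 1) ^ (4 * p) * (X 2) ^ (6 * p) * (X 3) ^ (10 * p)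
          + 4 * (X 0) ^ p * (X 1) ^ (7 * p) * (X 2) ^ (8 * p) * (X 3) ^ (8 * p)
          + 2 * (X 0) ^ (2 * p) * (X 1) ^ (6 * p) * (X 2) ^ (8 * p) * (X 3) ^ (8 * p)
          + 4 * (X 0) ^ (3 * p) * (X 1) ^ (5 * p) * (X 2) ^ (8 * p) * (X 3) ^ (8 * p)
          + (X 0) ^ (4 * p) * (X 1) ^ (4 * p) * (X 2) ^ (8 * p) * (X 3) ^ (8 * p)
          + 4 * (X 0) ^ (5 * p) * (X 1) ^ (3 * p) * (X 2) ^ (8 * p) * (X 3) ^ (8 * p)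
          + 2 * (X 0) ^ (6 * p) * (X 1) ^ (2 * p) * (X 2) ^ (8 * p) * (X 3) ^ (8 * p)
          + 4 * (X 0) ^ (7 * p) * (X 1) ^ p * (X 2) ^ (8 * p) * (X 3) ^ (8 * p)
          + 4 * (X 0) ^ (4 * p) * (X 1) ^ (4 * p) * (X 2) ^ (10 * p) * (X 3) ^ (6 * p)
          + 4 * (X 0) ^ (2 * p) * (X 1) ^ (6 * p) * (X 2) ^ (12 * p) * (X 3) ^ (4 * p)
          + 2 * (X 0) ^ (4 * p) * (X 1) ^ (4 * p) * (X 2) ^ (12 * p) * (X 3) ^ (4 * p)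
          + 4 * (X 0) ^ (6 * p) * (X 1) ^ (2 * p) * (X 2) ^ (12 * p) * (X 3) ^ (4 * p)
          + 4 * (X 0) ^ (4 * p) * (X 1) ^ (4 * p) * (X 2) ^ (14 * p) * (X 3) ^ (2 * p))) := by
  refine (C_dvd_iff_dvd_coeff 8 _).mp ?_
  obtain ⟨t, rfl⟩ : ∃ t, j = t + 3 := ⟨j - 3, by omega⟩
  rw [Nat.add_sub_cancel] at hp
  have h2p : 2 * p = 2 ^ (t + 1) := by rw [hp, pow_succ']
  have hT1 := eight_dvd_TPoly_sub_residue hp (X 0 : MvPolynomial (Fin 4) ℤ) (X 1)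
  have hT2 := eight_dvd_TPoly_sub_residue h2p (X 2 : MvPolynomial (Fin 4) ℤ) (X 3)
  rw [show t + 1 + 3 = t + 3 + 1 by omega] at hT2
  rw [map_ofNat C 8]
  convert eight_dvd_mul_sub_of_residues hT1 hT2 using 2
  ring
end
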